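/- Suppose τ₀, τ₁, τ₂ ∈ H satisfy ⟨τ₀,τ₀⟩ = ⟨τ₁,τ₁⟩ = ⟨τ₂,τ₂⟩ = 1/3, τ₂ = ω τ₁, ⟨τ₀, τ₁⟩ = −ω/6, and ⟨τ₀, τ₂⟩ = −ω²/6. Then ⟨Φ₀₀, Φ₁₁⟩ = 2/3; in particular Φ₀₀ and Φ₁₁ are not orthogonal. -/

import Mathlib

open scoped BigOperators ComplexConjugate

variable {H : Type*} [NormedAddCommGroup H] [InnerProductSpace ℂ H]

/-- The primitive cube root of unity `ω = e^{2πi/3}`. -/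
noncomputable def ω : ℂ := Complex.exp (2 * Real.pi * Complex.I / 3)

/-- `|v_j⟩ = (1/√3)(i|0⟩ + ω^{-j}|1⟩ + ω^{-2j}|2⟩)` in `ℂ³`. -/
noncomputable def v (j : Fin 3) : Fin 3 → ℂ := fun k =>
  ((Real.sqrt 3 : ℂ))⁻¹ * (if k = 0 then Complex.I else ω ^ (-((j : ℕ) * (k : ℕ) : ℤ)))

/-- `|v_j'⟩ = (1/√3)(|0⟩ + ω^{-j}|1⟩ + i ω^{-2j}|2⟩)` in `ℂ³`. -/
noncomputable def v' (j : Fin 3) : Fin 3 → ℂ := fun k =>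
  ((Real.sqrt 3 : ℂ))⁻¹ * (if k = 2 then Complex.I else 1) * ω ^ (-((j : ℕ) * (k : ℕ) : ℤ))

/-- The inner product on `ℂ³ ⊗ H`, viewed as triples of elements of `H`:
`⟨x, y⟩ = ∑ₖ ⟨xₖ, yₖ⟩` (conjugate-linear in the first argument). -/
noncomputable def ip (x y : Fin 3 → H) : ℂ := ∑ k, (inner ℂ (x k) (y k) : ℂ)

/-- `Φ₀₀ = √2 [ |v₀⟩⊗τ₀ − ½|v₁⟩⊗τ₁ − ½|v₂⟩⊗τ₂ ]` in `ℂ³ ⊗ H`. -/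
noncomputable def Phi00 (τ₀ τ₁ τ₂ : H) : Fin 3 → H := fun k =>
  (Real.sqrt 2 : ℂ) • (v 0 k • τ₀ - ((1/2 : ℂ) * v 1 k) • τ₁ - ((1/2 : ℂ) * v 2 k) • τ₂)

/-- `Φ₀₁ = √2 [ −(√3/2)|v₁'⟩⊗τ₁ + (√3/2)|v₂'⟩⊗τ₂ ]` in `ℂ³ ⊗ H`. -/
noncomputable def Phi01 (τ₁ τ₂ : H) : Fin 3 → H := fun k =>
  (Real.sqrt 2 : ℂ) • ((-((Real.sqrt 3 : ℂ) / 2) * v' 1 k) • τ₁ +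
    (((Real.sqrt 3 : ℂ) / 2) * v' 2 k) • τ₂)

/-- `Φ₁₀ = √2 [ (√3/2)|v₁⟩⊗τ₁ − (√3/2)|v₂⟩⊗τ₂ ]` in `ℂ³ ⊗ H`. -/
noncomputable def Phi10 (τ₁ τ₂ : H) : Fin 3 → H := fun k =>
  (Real.sqrt 2 : ℂ) • ((((Real.sqrt 3 : ℂ) / 2) * v 1 k) • τ₁ -
    (((Real.sqrt 3 : ℂ) / 2) * v 2 k) • τ₂)

/-- `Φ₁₁ = √2 [ |v₀'⟩⊗τ₀ − ½|v₁'⟩⊗τ₁ − ½|v₂'⟩⊗τ₂ ]` in `ℂ³ ⊗ H`. -/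
noncomputable def Phi11 (τ₀ τ₁ τ₂ : H) : Fin 3 → H := fun k =>
  (Real.sqrt 2 : ℂ) • (v' 0 k • τ₀ - ((1/2 : ℂ) * v' 1 k) • τ₁ - ((1/2 : ℂ) * v' 2 k) • τ₂)

/-
Componentwise, `Φ₀₀` and `Φ₁₁` are multiples of the same vectors
`T_k = τ₀ - ½ ω^{-k} τ₁ - ½ ω^{-2k} τ₂`, with coefficients `√(2/3) (i, 1, 1)` and
`√(2/3) (1, 1, i)` respectively, so `⟨Φ₀₀, Φ₁₁⟩ = (2/3) (‖T₁‖² + i (‖T₂‖² - ‖T₀‖²))`.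
When `τ₂ = ω τ₁` we get `T₂ = T₀` and `T₁ = τ₀ - ω² τ₁`, and `‖T₁‖² = 1/3 + 1/6 + 1/6 + 1/3 = 1`.
-/

lemma isPrimitiveRoot_omega : IsPrimitiveRoot ω 3 := by
  simpa [ω] using Complex.isPrimitiveRoot_exp 3 (by norm_num)

lemma omega_pow_three : ω ^ 3 = 1 := isPrimitiveRoot_omega.pow_eq_one

lemma omega_inv : ω⁻¹ = ω ^ 2 :=
  inv_eq_of_mul_eq_one_left (by rw [← pow_succ, omega_pow_three])

lemma conj_omega : conj ω = ω ^ 2 := by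
  rw [← omega_inv, Complex.inv_eq_conj (isPrimitiveRoot_omega.norm'_eq_one (by norm_num))]

noncomputable def commonComponent (τ₀ τ₁ τ₂ : H) (k : Fin 3) : H :=
  τ₀ - ((1/2 : ℂ) * ω⁻¹ ^ (k : ℕ)) • τ₁ - ((1/2 : ℂ) * ω⁻¹ ^ (2 * (k : ℕ))) • τ₂

lemma Phi00_apply (τ₀ τ₁ τ₂ : H) (k : Fin 3) :
    Phi00 τ₀ τ₁ τ₂ k =
      ((Real.sqrt 2 : ℂ) * (Real.sqrt 3 : ℂ)⁻¹ * (if k = 0 then Complex.I else 1)) •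
        commonComponent τ₀ τ₁ τ₂ k := by
  fin_cases k <;> simp [Phi00, commonComponent, v] <;> module

lemma Phi11_apply (τ₀ τ₁ τ₂ : H) (k : Fin 3) :
    Phi11 τ₀ τ₁ τ₂ k =
      ((Real.sqrt 2 : ℂ) * (Real.sqrt 3 : ℂ)⁻¹ * (if k = 2 then Complex.I else 1)) •
        commonComponent τ₀ τ₁ τ₂ k := by
  fin_cases k <;> simp [Phi11, commonComponent, v'] <;> module

lemma ip_smul_smul (a b : Fin 3 → ℂ) (x : Fin 3 → H) :
    ip (fun k => a k • x k) (fun k => b k • x k) =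
      ∑ k, conj (a k) * b k * inner ℂ (x k) (x k) := by
  refine Finset.sum_congr rfl fun k _ => ?_
  rw [inner_smul_left, inner_smul_right]
  ring

lemma ip_Phi00_Phi11 (τ₀ τ₁ τ₂ : H) :
    ip (Phi00 τ₀ τ₁ τ₂) (Phi11 τ₀ τ₁ τ₂) =
      2 / 3 * (inner ℂ (commonComponent τ₀ τ₁ τ₂ 1) (commonComponent τ₀ τ₁ τ₂ 1) +
        Complex.I * (inner ℂ (commonComponent τ₀ τ₁ τ₂ 2) (commonComponent τ₀ τ₁ τ₂ 2) -
          inner ℂ (commonComponent τ₀ τ₁ τ₂ 0) (commonComponent τ₀ τ₁ τ₂ 0))) := by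
  rw [funext (Phi00_apply τ₀ τ₁ τ₂), funext (Phi11_apply τ₀ τ₁ τ₂), ip_smul_smul]
  set c : ℂ := (Real.sqrt 2 : ℂ) * (Real.sqrt 3 : ℂ)⁻¹
  have hc : conj c * c = 2 / 3 := by
    have h2 : (Real.sqrt 2 : ℂ) ^ 2 = 2 := by norm_cast; simp
    have h3 : (Real.sqrt 3 : ℂ) ^ 2 = 3 := by norm_cast; simp
    simp only [c, map_mul, map_inv₀, Complex.conj_ofReal]
    field_simp
    rw [h2, h3]
    ring
  simp only [Fin.sum_univ_three, Fin.isValue, Fin.reduceEq, ↓reduceIte, map_mul, map_one,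
    Complex.conj_I]
  linear_combination (inner ℂ (commonComponent τ₀ τ₁ τ₂ 1) (commonComponent τ₀ τ₁ τ₂ 1) +
        Complex.I * (inner ℂ (commonComponent τ₀ τ₁ τ₂ 2) (commonComponent τ₀ τ₁ τ₂ 2) -
          inner ℂ (commonComponent τ₀ τ₁ τ₂ 0) (commonComponent τ₀ τ₁ τ₂ 0))) * hc

lemma commonComponent_omega_smul_two (τ₀ τ₁ : H) :
    commonComponent τ₀ τ₁ (ω • τ₁) 2 = commonComponent τ₀ τ₁ (ω • τ₁) 0 := by
  simp only [commonComponent, smul_smul, omega_inv, Fin.val_zero, Fin.val_two]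
  linear_combination (norm := module) ((-ω / 2 - (ω ^ 6 + ω ^ 3 + 1) / 2) * omega_pow_three) • τ₁

lemma commonComponent_omega_smul_one (τ₀ τ₁ : H) :
    commonComponent τ₀ τ₁ (ω • τ₁) 1 = τ₀ - ω ^ 2 • τ₁ := by
  simp only [commonComponent, smul_smul, omega_inv, Fin.val_one]
  linear_combination (norm := module) (-ω ^ 2 / 2 * omega_pow_three) • τ₁

lemma inner_sub_omega_sq_smul_self {τ₀ τ₁ : H} (h0 : inner ℂ τ₀ τ₀ = (1 / 3 : ℂ))
    (h1 : inner ℂ τ₁ τ₁ = (1 / 3 : ℂ)) (h01 : inner ℂ τ₀ τ₁ = -ω / 6) :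
    inner ℂ (τ₀ - ω ^ 2 • τ₁) (τ₀ - ω ^ 2 • τ₁) = 1 := by
  have h10 : inner ℂ τ₁ τ₀ = -ω ^ 2 / 6 := by
    rw [← inner_conj_symm, h01, map_div₀, map_neg, conj_omega, map_ofNat]
  simp only [inner_sub_left, inner_sub_right, inner_smul_left, inner_smul_right, h0, h1, h01, h10,
    map_pow, conj_omega]
  linear_combination (1 / 6 + (ω ^ 3 + 1) / 2) * omega_pow_three

theorem Phi00_Phi11_not_orthogonal_general {H : Type*} [NormedAddCommGroup H] [InnerProductSpace ℂ H]
    (τ₀ τ₁ τ₂ : H)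
    (h0 : (inner ℂ τ₀ τ₀ : ℂ) = 1/3) (h1 : (inner ℂ τ₁ τ₁ : ℂ) = 1/3)
    (h12 : τ₂ = ω • τ₁)
    (h01 : (inner ℂ τ₀ τ₁ : ℂ) = -ω / 6) :
    ip (Phi00 τ₀ τ₁ τ₂) (Phi11 τ₀ τ₁ τ₂) = 2/3 ∧
    ip (Phi00 τ₀ τ₁ τ₂) (Phi11 τ₀ τ₁ τ₂) ≠ 0 := by
  have hip : ip (Phi00 τ₀ τ₁ τ₂) (Phi11 τ₀ τ₁ τ₂) = 2 / 3 := by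
    subst h12
    rw [ip_Phi00_Phi11, commonComponent_omega_smul_two, sub_self, mul_zero, add_zero,
      commonComponent_omega_smul_one, inner_sub_omega_sq_smul_self h0 h1 h01, mul_one]
  exact ⟨hip, hip ▸ by norm_num⟩

/-- If `⟨τ₀,τ₀⟩ = ⟨τ₁,τ₁⟩ = ⟨τ₂,τ₂⟩ = 1/3`, `τ₂ = ω τ₁`,
`⟨τ₀,τ₁⟩ = -ω/6` and `⟨τ₀,τ₂⟩ = -ω²/6`, then `⟨Φ₀₀,Φ₁₁⟩ = 2/3 ≠ 0`; in particular
`Φ₀₀` and `Φ₁₁` are not orthogonal. -/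
theorem Phi00_Phi11_not_orthogonal {H : Type*} [NormedAddCommGroup H] [InnerProductSpace ℂ H]
    (τ₀ τ₁ τ₂ : H)
    (h0 : (inner ℂ τ₀ τ₀ : ℂ) = 1/3) (h1 : (inner ℂ τ₁ τ₁ : ℂ) = 1/3)
    (h2 : (inner ℂ τ₂ τ₂ : ℂ) = 1/3) (h12 : τ₂ = ω • τ₁)
    (h01 : (inner ℂ τ₀ τ₁ : ℂ) = -ω / 6) (h02 : (inner ℂ τ₀ τ₂ : ℂ) = -ω ^ 2 / 6) :
    ip (Phi00 τ₀ τ₁ τ₂) (Phi11 τ₀ τ₁ τ₂) = 2/3 ∧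
    ip (Phi00 τ₀ τ₁ τ₂) (Phi11 τ₀ τ₁ τ₂) ≠ 0 :=
  Phi00_Phi11_not_orthogonal_general τ₀ τ₁ τ₂ h0 h1 h12 h01
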